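/- Let p ∈ (1,∞), δ ∈ (0,1/2), and let P ⊂ Q be cubes in ℝⁿ. Suppose F : Q × P₁ → ℝ satisfies: (i) for each x ∈ Q, the function y₁ ↦ F(x,y₁) is M-piecewise monotone; (ii) for each δ, sup over x ∈ Q outside the δ-extended halo of P and y₁ ∈ P₁ of |F(x,y₁)| is finite with bound C_δ; (iii) the function x ↦ 𝟏_{H_δ^{P;Q}}(x) ∫_{P₁} |F(x,y₁)| dy₁ tends to 0 in L^p(Q) as δ → 0. Then ∫_{P₁} F(x,y₁) s_k(y₁) dy₁ → 0 in L^p(Q) as k → ∞, where s_k is the alternating ±1 function on P₁ with 2^k sign changes. -/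

import Mathlib

open MeasureTheory Set Filter ENNReal

/-- The axis-parallel cube in `ℝⁿ` with lower corner `c` and side length `r`. -/
def euCube {n : ℕ} (c : EuclideanSpace ℝ (Fin n)) (r : ℝ) : Set (EuclideanSpace ℝ (Fin n)) :=
  {x | ∀ i, c i ≤ x i ∧ x i ≤ c i + r}

/-- The `Q`-extended `δ`-halo of the cube `P` (lower corner `p`, side `ℓP`) inside the cube `Q`
(lower corner `q`, side `ℓQ`):
`H_δ^{P;Q} = {x ∈ Q : dist(x_j, ∂P_j) < δ·ℓ(P) for some j}`. -/
def extHalo {n : ℕ} (p : EuclideanSpace ℝ (Fin n)) (ℓP : ℝ)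
    (q : EuclideanSpace ℝ (Fin n)) (ℓQ : ℝ) (δ : ℝ) : Set (EuclideanSpace ℝ (Fin n)) :=
  {x ∈ euCube q ℓQ | ∃ j, min |x j - p j| |x j - (p j + ℓP)| < δ * ℓP}

/-- The alternating ±1 step function with `2^k` sign changes supported on `[c, c + L)`. -/
noncomputable def sAltOn (k : ℕ) (c L : ℝ) (x : ℝ) : ℝ :=
  if x ∈ Ico c (c + L) then (if Even ⌊(x - c) / L * 2 ^ k⌋ then 1 else -1) else 0

/-! Off the halo, `F x` is bounded by `C_δ` and piecewise monotone. On a monotone piece `g`,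
translating by the half-period `h = ℓ(P)/2^k` flips the sign of `s_k`, so twice `∫ g s_k` equals
`∫ (g(y) - g(y+h)) s_k(y) dy` up to two boundary terms of size `C_δ h`, and by monotonicity
`∫ |g(y+h) - g(y)| dy` telescopes into two more such terms. Hence
`∫ F(x,·) s_k = O(M C_δ 2^{-k})` uniformly off the halo, while on the halo it is at most
`∫ |F(x,·)|`, whose `L^p` norm is small by (iii) once `δ` is small. -/

open intervalIntegral

theorem IntervalIntegrable.mul_bdd {f g : ℝ → ℝ} {a b c : ℝ}
    (hf : IntervalIntegrable f volume a b) (hg : AEStronglyMeasurable g) (hgc : ∀ x, |g x| ≤ c) :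
    IntervalIntegrable (fun x => f x * g x) volume a b :=
  ⟨hf.1.mul_bdd hg.restrict (ae_of_all _ hgc), hf.2.mul_bdd hg.restrict (ae_of_all _ hgc)⟩

theorem IntervalIntegrable.mono_Icc {f : ℝ → ℝ} {u v c d : ℝ}
    (hf : IntervalIntegrable f volume u v) (huv : u ≤ v) (hc : c ∈ Icc u v) (hd : d ∈ Icc u v) :
    IntervalIntegrable f volume c d :=
  hf.mono_set (uIcc_subset_uIcc (uIcc_of_le huv ▸ hc) (uIcc_of_le huv ▸ hd))

theorem abs_intervalIntegral_le_of_abs_le {f : ℝ → ℝ} {a b C : ℝ} (hab : a ≤ b)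
    (hf : ∀ x ∈ Icc a b, |f x| ≤ C) : |∫ x in a..b, f x| ≤ C * (b - a) := by
  have := norm_integral_le_of_norm_le_const (f := f) fun x hx =>
    hf x (Ioc_subset_Icc_self ((uIoc_of_le hab) ▸ hx))
  rwa [abs_of_nonneg (sub_nonneg.2 hab)] at this

theorem MonotoneOn.intervalIntegrable_of_abs_le {g : ℝ → ℝ} {u v C : ℝ} (huv : u ≤ v)
    (hg : MonotoneOn g (Ioo u v)) (hC : ∀ y ∈ Ioo u v, |g y| ≤ C) :
    IntervalIntegrable g volume u v := by
  rw [intervalIntegrable_iff_integrableOn_Ioo_of_le huv]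
  exact .of_bound measure_Ioo_lt_top
    (aemeasurable_restrict_of_monotoneOn measurableSet_Ioo hg).aestronglyMeasurable C
    (ae_restrict_of_forall_mem measurableSet_Ioo hC)

theorem integral_abs_comp_add_sub_le_of_monotoneOn {g : ℝ → ℝ} {u v h C : ℝ} (hh : 0 ≤ h)
    (hhv : u + h ≤ v) (hg : MonotoneOn g (Ioo u v)) (hC : ∀ y ∈ Icc u v, |g y| ≤ C) :
    ∫ y in u..v - h, |g (y + h) - g y| ≤ 2 * C * h := by
  have huv : u ≤ v := by linarith
  have hgi : IntervalIntegrable g volume u v :=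
    hg.intervalIntegrable_of_abs_le huv fun y hy => hC y (Ioo_subset_Icc_self hy)
  have hshift : IntervalIntegrable (fun y => g (y + h)) volume u (v - h) := by
    simpa using (hgi.mono_Icc huv ⟨by linarith, hhv⟩ ⟨huv, le_rfl⟩).comp_add_right h
  have hend : ∀ c ∈ Icc u (v - h), |∫ y in c..c + h, g y| ≤ C * h := fun c hc => by
    simpa using abs_intervalIntegral_le_of_abs_le (by linarith : c ≤ c + h)
      fun y hy => hC y ⟨by linarith [hy.1, hc.1], by linarith [hy.2, hc.2]⟩
  calc ∫ y in u..v - h, |g (y + h) - g y|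
      = ∫ y in u..v - h, (g (y + h) - g y) := by
        refine integral_congr_ae ?_
        filter_upwards [Measure.ae_ne volume (v - h)] with y hy hmem
        rw [uIoc_of_le (by linarith)] at hmem
        obtain ⟨huy, hyv⟩ := hmem
        have hyv' := lt_of_le_of_ne hyv hy
        exact abs_of_nonneg <| sub_nonneg.2 <|
          hg ⟨huy, by linarith⟩ ⟨by linarith, by linarith⟩ (by linarith)
    _ = (∫ y in u + h..v, g y) - ∫ y in u..v - h, g y := by
        rw [integral_sub hshift (hgi.mono_Icc huv ⟨le_rfl, huv⟩ ⟨by linarith, by linarith⟩),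
          integral_comp_add_right]
        simp
    _ = (∫ y in v - h..v, g y) - ∫ y in u..u + h, g y := by
        rw [integral_interval_sub_interval_comm (hgi.mono_Icc huv ⟨by linarith, hhv⟩ ⟨huv, le_rfl⟩)
          (hgi.mono_Icc huv ⟨le_rfl, huv⟩ ⟨by linarith, by linarith⟩)
          (hgi.mono_Icc huv ⟨by linarith, hhv⟩ ⟨le_rfl, huv⟩), integral_symm u,
          integral_symm (v - h)]
        ring
    _ ≤ 2 * C * h := by
        have hv := hend (v - h) ⟨by linarith, le_rfl⟩
        rw [sub_add_cancel] at hv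
        linarith [abs_le.1 hv, abs_le.1 (hend u ⟨le_rfl, by linarith⟩)]

theorem integral_comp_add_mul_eq_neg_of_antiperiodicOn {g s : ℝ → ℝ} {u v h : ℝ}
    (huv : u ≤ v - h) (hs : ∀ y ∈ Ioo u (v - h), s (y + h) = -s y) :
    ∫ y in u + h..v, g y * s y = -∫ y in u..v - h, g (y + h) * s y := by
  rw [← intervalIntegral.integral_neg, ← sub_add_cancel v h, ← integral_comp_add_right,
    add_sub_cancel_right]
  refine integral_congr_ae ?_
  filter_upwards [Measure.ae_ne volume (v - h)] with y hy hmem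
  rw [uIoc_of_le huv] at hmem
  rw [hs y ⟨hmem.1, lt_of_le_of_ne hmem.2 hy⟩, mul_neg]

theorem abs_integral_mul_le_of_monotoneOn {g s : ℝ → ℝ} {u v h C : ℝ} (hh : 0 ≤ h)
    (huv : u ≤ v) (hg : MonotoneOn g (Ioo u v)) (hC : ∀ y ∈ Icc u v, |g y| ≤ C)
    (hsm : AEStronglyMeasurable s) (hs1 : ∀ y, |s y| ≤ 1)
    (hs : ∀ y ∈ Ioo u (v - h), s (y + h) = -s y) :
    |∫ y in u..v, g y * s y| ≤ 2 * C * h := by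
  have hgs : ∀ y ∈ Icc u v, |g y * s y| ≤ C := fun y hy => by
    rw [abs_mul]; exact (mul_le_of_le_one_right (abs_nonneg _) (hs1 y)).trans (hC y hy)
  rcases le_or_gt (v - u) h with hvu | hvu
  · have hC0 : 0 ≤ C := (abs_nonneg _).trans (hC u ⟨le_rfl, huv⟩)
    calc _ ≤ C * (v - u) := abs_intervalIntegral_le_of_abs_le huv hgs
      _ ≤ 2 * C * h := by nlinarith
  have hgi : IntervalIntegrable g volume u v :=
    hg.intervalIntegrable_of_abs_le huv fun y hy => hC y (Ioo_subset_Icc_self hy)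
  have gsi : ∀ {c d}, c ∈ Icc u v → d ∈ Icc u v →
      IntervalIntegrable (fun y => g y * s y) volume c d :=
    fun hc hd => (hgi.mono_Icc huv hc hd).mul_bdd hsm hs1
  have hshift : IntervalIntegrable (fun y => g (y + h)) volume u (v - h) := by
    simpa using
      (hgi.mono_Icc (c := u + h) huv ⟨by linarith, by linarith⟩ ⟨huv, le_rfl⟩).comp_add_right h
  have hend : ∀ c ∈ Icc u (v - h), |∫ y in c..c + h, g y * s y| ≤ C * h := fun c hc => by
    simpa using abs_intervalIntegral_le_of_abs_le (by linarith : c ≤ c + h)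
      fun y hy => hgs y ⟨by linarith [hy.1, hc.1], by linarith [hy.2, hc.2]⟩
  have hleft : ∫ y in u..v, g y * s y =
      (∫ y in u..v - h, g y * s y) + ∫ y in v - h..v, g y * s y :=
    (integral_add_adjacent_intervals (gsi ⟨le_rfl, huv⟩ ⟨by linarith, by linarith⟩)
      (gsi ⟨by linarith, by linarith⟩ ⟨huv, le_rfl⟩)).symm
  have hright : ∫ y in u..v, g y * s y =
      (∫ y in u..u + h, g y * s y) - ∫ y in u..v - h, g (y + h) * s y := by
    rw [← integral_add_adjacent_intervals (b := u + h) (gsi ⟨le_rfl, huv⟩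
      ⟨by linarith, by linarith⟩) (gsi ⟨by linarith, by linarith⟩ ⟨huv, le_rfl⟩),
      integral_comp_add_mul_eq_neg_of_antiperiodicOn (by linarith) hs]
    ring
  have hdiff : |(∫ y in u..v - h, g y * s y) - ∫ y in u..v - h, g (y + h) * s y| ≤
      2 * C * h := by
    have hdi : IntervalIntegrable (fun y => |g (y + h) - g y|) volume u (v - h) :=
      (hshift.sub (hgi.mono_Icc huv ⟨le_rfl, huv⟩ ⟨by linarith, by linarith⟩)).abs
    rw [← integral_sub (gsi ⟨le_rfl, huv⟩ ⟨by linarith, by linarith⟩) (hshift.mul_bdd hsm hs1)]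
    refine (norm_integral_le_of_norm_le (f := fun y => g y * s y - g (y + h) * s y)
      (by linarith) (ae_of_all _ fun y _ => ?_) hdi).trans
      (integral_abs_comp_add_sub_le_of_monotoneOn hh (by linarith) hg hC)
    rw [Real.norm_eq_abs, ← sub_mul, abs_mul, abs_sub_comm]
    exact mul_le_of_le_one_right (abs_nonneg _) (hs1 y)
  have hv := hend (v - h) ⟨by linarith, le_rfl⟩
  rw [sub_add_cancel] at hv
  have hu := hend u ⟨le_rfl, by linarith⟩
  rw [abs_le] at hv hu hdiff ⊢
  constructor <;> linarith

theorem abs_integral_mul_le_of_piecewise_monotone {g s : ℝ → ℝ} {t : ℕ → ℝ} {M : ℕ} {h C : ℝ}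
    (hh : 0 ≤ h) (ht : ∀ i < M, t i ≤ t (i + 1))
    (hpm : ∀ i < M,
      MonotoneOn g (Ioo (t i) (t (i + 1))) ∨ AntitoneOn g (Ioo (t i) (t (i + 1))))
    (hC : ∀ y ∈ Icc (t 0) (t M), |g y| ≤ C) (hsm : AEStronglyMeasurable s)
    (hs1 : ∀ y, |s y| ≤ 1) (hs : ∀ y ∈ Ioo (t 0) (t M - h), s (y + h) = -s y) :
    |∫ y in t 0..t M, g y * s y| ≤ M * (2 * C * h) := by
  have htm : MonotoneOn t (Iic M) :=
    monotoneOn_of_le_succ ordConnected_Iic fun i _ _ hi => ht i (Order.succ_le_iff.mp hi)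
  have hsub : ∀ i < M, Icc (t i) (t (i + 1)) ⊆ Icc (t 0) (t M) := fun i hi =>
    Icc_subset_Icc (htm (Nat.zero_le M) hi.le (Nat.zero_le i))
      (htm (Nat.succ_le_of_lt hi) (mem_Iic.2 le_rfl) (Nat.succ_le_of_lt hi))
  have hpiece : ∀ i < M, IntervalIntegrable (fun y => g y * s y) volume (t i) (t (i + 1)) ∧
      |∫ y in t i..t (i + 1), g y * s y| ≤ 2 * C * h := by
    intro i hi
    have hCi : ∀ y ∈ Icc (t i) (t (i + 1)), |g y| ≤ C := fun y hy => hC y (hsub i hi hy)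
    have hsi : ∀ y ∈ Ioo (t i) (t (i + 1) - h), s (y + h) = -s y := fun y hy =>
      hs y ⟨(hsub i hi ⟨le_rfl, ht i hi⟩).1.trans_lt hy.1,
        hy.2.trans_le (sub_le_sub_right (hsub i hi ⟨ht i hi, le_rfl⟩).2 h)⟩
    rcases hpm i hi with hmono | hanti
    · exact ⟨(hmono.intervalIntegrable_of_abs_le (ht i hi) fun y hy =>
          hCi y (Ioo_subset_Icc_self hy)).mul_bdd hsm hs1,
        abs_integral_mul_le_of_monotoneOn hh (ht i hi) hmono hCi hsm hs1 hsi⟩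
    · have hCi' : ∀ y ∈ Icc (t i) (t (i + 1)), |-g y| ≤ C := by simpa only [abs_neg] using hCi
      refine ⟨?_, ?_⟩
      · simpa [Pi.neg_def] using ((hanti.neg.intervalIntegrable_of_abs_le (ht i hi) fun y hy =>
          hCi' y (Ioo_subset_Icc_self hy)).mul_bdd hsm hs1).neg
      · simpa [neg_mul, intervalIntegral.integral_neg, abs_neg] using
          abs_integral_mul_le_of_monotoneOn hh (ht i hi) hanti.neg hCi' hsm hs1 hsi
  rw [← sum_integral_adjacent_intervals fun i hi => (hpiece i hi).1]
  calc _ ≤ ∑ i ∈ Finset.range M, |∫ y in t i..t (i + 1), g y * s y| :=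
        Finset.abs_sum_le_sum_abs _ _
    _ ≤ ∑ _i ∈ Finset.range M, 2 * C * h :=
        Finset.sum_le_sum fun i hi => (hpiece i (Finset.mem_range.1 hi)).2
    _ = M * (2 * C * h) := by simp

theorem abs_sAltOn_le_one (k : ℕ) (c L y : ℝ) : |sAltOn k c L y| ≤ 1 := by
  unfold sAltOn; split_ifs <;> simp

theorem abs_sAltOn_of_mem (k : ℕ) {c L y : ℝ} (hy : y ∈ Ico c (c + L)) : |sAltOn k c L y| = 1 := by
  unfold sAltOn; rw [if_pos hy]; split_ifs <;> simp

theorem measurable_sAltOn (k : ℕ) (c L : ℝ) : Measurable (sAltOn k c L) := by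
  refine Measurable.ite measurableSet_Ico (Measurable.ite ?_ measurable_const measurable_const)
    measurable_const
  exact (Int.measurable_floor.comp (((measurable_id.sub_const c).div_const L).mul_const _))
    (MeasurableSet.of_discrete (s := {m : ℤ | Even m}))

theorem sAltOn_add_div_pow (k : ℕ) {c L y : ℝ} (hL : 0 < L) (hcy : c ≤ y)
    (hy : y + L / 2 ^ k < c + L) : sAltOn k c L (y + L / 2 ^ k) = -sAltOn k c L y := by
  have hyI : y ∈ Ico c (c + L) := ⟨hcy, by linarith [show 0 < L / 2 ^ k by positivity]⟩
  have hyI' : y + L / 2 ^ k ∈ Ico c (c + L) := ⟨by linarith [show 0 < L / 2 ^ k by positivity], hy⟩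
  have hfloor : (y + L / 2 ^ k - c) / L * 2 ^ k = (y - c) / L * 2 ^ k + 1 := by
    field_simp; ring
  simp only [sAltOn, if_pos hyI, if_pos hyI', hfloor, Int.floor_add_one, Int.even_add_one]
  split_ifs <;> simp

theorem abs_integral_mul_sAltOn_le_integral_abs (k : ℕ) {c L : ℝ} (hL : 0 ≤ L) (g : ℝ → ℝ) :
    |∫ y in c..c + L, g y * sAltOn k c L y| ≤ ∫ y in c..c + L, |g y| := by
  refine (abs_integral_le_integral_abs (by linarith)).trans_eq (integral_congr_ae ?_)
  filter_upwards [Measure.ae_ne volume (c + L)] with y hy hmem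
  rw [uIoc_of_le (by linarith)] at hmem
  rw [abs_mul, abs_sAltOn_of_mem k ⟨hmem.1.le, lt_of_le_of_ne hmem.2 hy⟩, mul_one]

theorem abs_integral_mul_sAltOn_le_of_piecewise_monotone (k : ℕ) {g : ℝ → ℝ} {t : ℕ → ℝ}
    {M : ℕ} {c L C : ℝ} (hL : 0 < L) (ht0 : t 0 = c) (htM : t M = c + L)
    (ht : ∀ i < M, t i ≤ t (i + 1))
    (hpm : ∀ i < M,
      MonotoneOn g (Ioo (t i) (t (i + 1))) ∨ AntitoneOn g (Ioo (t i) (t (i + 1))))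
    (hC : ∀ y ∈ Icc c (c + L), |g y| ≤ C) :
    |∫ y in c..c + L, g y * sAltOn k c L y| ≤ M * (2 * C * (L / 2 ^ k)) := by
  have hs : ∀ y ∈ Ioo (t 0) (t M - L / 2 ^ k), sAltOn k c L (y + L / 2 ^ k) = -sAltOn k c L y :=
    fun y hy => sAltOn_add_div_pow k hL (ht0 ▸ hy.1.le) (by linarith [hy.2])
  have := abs_integral_mul_le_of_piecewise_monotone (by positivity) ht hpm (by rwa [ht0, htM])
    (measurable_sAltOn k c L).aestronglyMeasurable (abs_sAltOn_le_one k c L) hs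
  rwa [ht0, htM] at this

theorem isCompact_euCube {n : ℕ} (c : EuclideanSpace ℝ (Fin n)) (r : ℝ) :
    IsCompact (euCube c r) := by
  have : euCube c r = PiLp.continuousLinearEquiv 2 ℝ (fun _ : Fin n => ℝ) ⁻¹'
      univ.pi fun i => Icc (c i) (c i + r) := by
    ext x; simp [euCube, Pi.le_def, forall_and]
  rw [this]
  exact (PiLp.continuousLinearEquiv 2 ℝ _).toHomeomorph.isCompact_preimage.2
    (isCompact_univ_pi fun _ => isCompact_Icc)

theorem tendsto_zero_of_eventually_le_add {ι : Type*} {l : Filter ι} [l.NeBot] {a : ℕ → ℝ≥0∞}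
    {E : ι → ℝ≥0∞} (hE : Tendsto E l (nhds 0))
    (h : ∀ᶠ δ in l, ∃ B : ℕ → ℝ≥0∞, Tendsto B atTop (nhds 0) ∧ ∀ k, a k ≤ E δ + B k) :
    Tendsto a atTop (nhds 0) := by
  refine ENNReal.tendsto_atTop_zero.2 fun ε hε => ?_
  have hε2 : 0 < ε / 2 := ENNReal.half_pos hε.ne'
  obtain ⟨δ, hEδ, B, hB, hle⟩ := ((hE.eventually (gt_mem_nhds hε2)).and h).exists
  obtain ⟨N, hN⟩ := ENNReal.tendsto_atTop_zero.1 hB _ hε2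
  exact ⟨N, fun k hk =>
    (hle k).trans ((add_le_add hEδ.le (hN k hk)).trans_eq (ENNReal.add_halves ε))⟩

theorem stmt18_general (n : ℕ) [NeZero n] (pp : ℝ) (hpp : 1 < pp) (M : ℕ)
    (p q : EuclideanSpace ℝ (Fin n)) (ℓP ℓQ : ℝ) (hℓP : 0 < ℓP)
    (F : EuclideanSpace ℝ (Fin n) → ℝ → ℝ)
    (hmono : ∀ x ∈ euCube q ℓQ, ∃ t : ℕ → ℝ,
      t 0 = p 0 ∧ t M = p 0 + ℓP ∧ (∀ i < M, t i ≤ t (i + 1)) ∧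
      ∀ i < M,
        (MonotoneOn (F x) (Ioo (t i) (t (i + 1))) ∨ AntitoneOn (F x) (Ioo (t i) (t (i + 1)))) ∧
        ((∀ y ∈ Ioo (t i) (t (i + 1)), 0 ≤ F x y) ∨ (∀ y ∈ Ioo (t i) (t (i + 1)), F x y ≤ 0)))
    (hbdd : ∀ δ ∈ Ioo (0:ℝ) (1/2), ∃ C : ℝ,
      ∀ x ∈ euCube q ℓQ \ extHalo p ℓP q ℓQ δ, ∀ y₁ ∈ Icc (p 0) (p 0 + ℓP), |F x y₁| ≤ C)
    (hhalo : Tendsto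
      (fun δ : ℝ => ∫⁻ x in euCube q ℓQ,
        (ENNReal.ofReal ((extHalo p ℓP q ℓQ δ).indicator
          (fun x => ∫ y₁ in (p 0)..(p 0 + ℓP), |F x y₁|) x)) ^ pp)
      (nhdsWithin 0 (Ioi (0:ℝ))) (nhds 0)) :
    Tendsto
      (fun k : ℕ => ∫⁻ x in euCube q ℓQ,
        (ENNReal.ofReal |∫ y₁ in (p 0)..(p 0 + ℓP), F x y₁ * sAltOn k (p 0) ℓP y₁|) ^ pp)
      atTop (nhds 0) := by
  have hQ := isCompact_euCube q ℓQ
  refine tendsto_zero_of_eventually_le_add hhalo ?_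
  filter_upwards [Ioo_mem_nhdsGT (by norm_num : (0:ℝ) < 1 / 2)] with δ hδ
  obtain ⟨C, hC⟩ := hbdd δ hδ
  let b : ℕ → ℝ := fun k => M * (2 * C * (ℓP / 2 ^ k))
  have hb : Tendsto b atTop (nhds 0) := by
    simpa using (((tendsto_const_nhds (x := ℓP)).div_atTop
      (tendsto_pow_atTop_atTop_of_one_lt (one_lt_two (α := ℝ)))).const_mul (2 * C)).const_mul
        (M : ℝ)
  refine ⟨fun k => volume (euCube q ℓQ) * ENNReal.ofReal (b k) ^ pp,
    (ENNReal.tendsto_const_mul_rpow_nhds_zero_of_pos hQ.measure_lt_top.ne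
      (by linarith)).comp (by simpa using ENNReal.tendsto_ofReal hb), fun k => ?_⟩
  beta_reduce
  rw [mul_comm, ← setLIntegral_const, ← lintegral_add_right _ measurable_const]
  refine lintegral_mono_ae (ae_restrict_of_forall_mem hQ.isClosed.measurableSet fun x hx => ?_)
  by_cases hxH : x ∈ extHalo p ℓP q ℓQ δ
  · refine le_add_right (ENNReal.rpow_le_rpow (ofReal_le_ofReal ?_) (by linarith))
    rw [indicator_of_mem hxH]
    exact abs_integral_mul_sAltOn_le_integral_abs k hℓP.le (F x)
  · obtain ⟨t, ht0, htM, ht, hpm⟩ := hmono x hx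
    refine le_add_left (ENNReal.rpow_le_rpow (ofReal_le_ofReal ?_) (by linarith))
    exact abs_integral_mul_sAltOn_le_of_piecewise_monotone k hℓP ht0 htM ht
      (fun i hi => (hpm i hi).1) (hC x ⟨hx, hxH⟩)

/-- Let `p ∈ (1,∞)`, `P ⊂ Q` cubes in `ℝⁿ`, `P₁` the first-coordinate interval of `P`, and
suppose `F : Q × P₁ → ℝ` satisfies: (i) `y₁ ↦ F(x,y₁)` is `M`-piecewise monotone for each
`x ∈ Q`; (ii) `F` is bounded on `(Q ∖ H_δ^{P;Q}) × P₁` for each `δ ∈ (0,1/2)`; (iii)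
`𝟏_{H_δ^{P;Q}}(x)·∫_{P₁}|F(x,y₁)|dy₁ → 0` in `L^p(Q)` as `δ → 0`.  Then
`∫_{P₁} F(x,y₁) s_k(y₁) dy₁ → 0` in `L^p(Q)` as `k → ∞`. -/
theorem stmt18 (n : ℕ) [NeZero n] (pp : ℝ) (hpp : 1 < pp) (M : ℕ) (hM : 1 ≤ M)
    (p q : EuclideanSpace ℝ (Fin n)) (ℓP ℓQ : ℝ) (hℓP : 0 < ℓP) (hℓQ : 0 < ℓQ)
    (hPQ : euCube p ℓP ⊆ euCube q ℓQ)
    (F : EuclideanSpace ℝ (Fin n) → ℝ → ℝ)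
    (hmono : ∀ x ∈ euCube q ℓQ, ∃ t : ℕ → ℝ,
      t 0 = p 0 ∧ t M = p 0 + ℓP ∧ (∀ i < M, t i ≤ t (i + 1)) ∧
      ∀ i < M,
        (MonotoneOn (F x) (Ioo (t i) (t (i + 1))) ∨ AntitoneOn (F x) (Ioo (t i) (t (i + 1)))) ∧
        ((∀ y ∈ Ioo (t i) (t (i + 1)), 0 ≤ F x y) ∨ (∀ y ∈ Ioo (t i) (t (i + 1)), F x y ≤ 0)))
    (hbdd : ∀ δ ∈ Ioo (0:ℝ) (1/2), ∃ C : ℝ,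
      ∀ x ∈ euCube q ℓQ \ extHalo p ℓP q ℓQ δ, ∀ y₁ ∈ Icc (p 0) (p 0 + ℓP), |F x y₁| ≤ C)
    (hhalo : Tendsto
      (fun δ : ℝ => ∫⁻ x in euCube q ℓQ,
        (ENNReal.ofReal ((extHalo p ℓP q ℓQ δ).indicator
          (fun x => ∫ y₁ in (p 0)..(p 0 + ℓP), |F x y₁|) x)) ^ pp)
      (nhdsWithin 0 (Ioi (0:ℝ))) (nhds 0)) :
    Tendsto
      (fun k : ℕ => ∫⁻ x in euCube q ℓQ,
        (ENNReal.ofReal |∫ y₁ in (p 0)..(p 0 + ℓP), F x y₁ * sAltOn k (p 0) ℓP y₁|) ^ pp)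
      atTop (nhds 0) :=
  stmt18_general n pp hpp M p q ℓP ℓQ hℓP F hmono hbdd hhalo
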